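/- arXiv:1611.06907 — 7 statements merged into one kernel-verified Lean document; each statement's English description precedes it below -/
import Mathlib

section
/- Let p be a prime and a ≥ b ≥ 1 integers. Then p divides all of the binomial coefficients C(a, b), C(a-1, b-1), ..., C(a-b+1, 1) if and only if a - b ≡ -1 (mod p^{l_p(b)}), where l_p(b) is the smallest nonnegative integer such that b < p^{l_p(b)}. -/
/-!
With `c = a - b` and `k = b - i`, the claim is that `p ∣ C(c + k, k)` for all `1 ≤ k ≤ b` iff
`p^l ∣ c + 1`. If `p^l ∣ c + 1`, the identity `(c + 1) C(c + k, c + 1) = k C(c + k, k)` gives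
`p^l ∣ k C(c + k, k)`, and `0 < k < p^l` forces `p ∣ C(c + k, k)`. Conversely, if `p^j` exactly
divides `c + 1` with `j < l`, then `p^j ≤ b` by minimality of `l`, and by Lucas' theorem
`C(c + p^j, p^j) ≡ (c + p^j) / p^j = (c + 1) / p^j (mod p)`, which is prime to `p`.
-/

namespace Nat

theorem choose_prime_pow_modEq_div {p : ℕ} [Fact p.Prime] (n j : ℕ) :
    n.choose (p ^ j) ≡ n / p ^ j [MOD p] := by
  induction j generalizing n with
  | zero => simpa using Nat.ModEq.refl n
  | succ j ih =>
    have hp : 0 < p := (Fact.out : p.Prime).pos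
    calc n.choose (p ^ (j + 1))
        ≡ (n % p).choose (p ^ (j + 1) % p) * (n / p).choose (p ^ (j + 1) / p) [MOD p] :=
          Choose.choose_modEq_choose_mod_mul_choose_div_nat
      _ = (n / p).choose (p ^ j) := by
          rw [pow_succ, Nat.mul_mod_left, Nat.mul_div_cancel _ hp, choose_zero_right, one_mul]
      _ ≡ n / p / p ^ j [MOD p] := ih _
      _ = n / p ^ (j + 1) := by rw [Nat.div_div_eq_div_mul, pow_succ']

theorem not_prime_dvd_choose_add_pow {p c j : ℕ} (hp : p.Prime) (hdvd : p ^ j ∣ c + 1)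
    (hndvd : ¬ p ^ (j + 1) ∣ c + 1) : ¬ p ∣ (c + p ^ j).choose (p ^ j) := by
  have := Fact.mk hp
  obtain ⟨m, hm⟩ := hdvd
  have hpj : 0 < p ^ j := pow_pos hp.pos j
  have hquot : (c + p ^ j) / p ^ j = m := by
    rw [show c + p ^ j = p ^ j * m + (p ^ j - 1) by omega,
      Nat.add_div_of_dvd_right (dvd_mul_right _ _), Nat.mul_div_cancel_left _ hpj,
      Nat.div_eq_of_lt (Nat.sub_lt hpj one_pos), add_zero]
  rw [(choose_prime_pow_modEq_div _ _).dvd_iff dvd_rfl, hquot]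
  rintro ⟨r, rfl⟩
  exact hndvd ⟨r, by rw [hm, pow_succ, mul_assoc]⟩

theorem prime_dvd_choose_add_of_pow_dvd_succ {p c k l : ℕ} (hp : p.Prime) (hc : p ^ l ∣ c + 1)
    (hk0 : 0 < k) (hk : k < p ^ l) : p ∣ (c + k).choose k := by
  have hpascal : (c + 1) * (c + k).choose (c + 1) = k * (c + k).choose k := by
    rw [mul_comm, choose_succ_right_eq, Nat.add_sub_cancel_left, choose_symm_add, mul_comm]
  by_contra hndvd
  have hcop : Coprime (p ^ l) ((c + k).choose k) :=
    ((hp.coprime_iff_not_dvd).2 hndvd).pow_left l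
  have hlk : p ^ l ∣ k := hcop.dvd_of_dvd_mul_right (hpascal ▸ dvd_mul_of_dvd_left hc _)
  exact absurd (Nat.le_of_dvd hk0 hlk) (not_le.2 hk)

theorem pow_dvd_succ_of_forall_prime_dvd_choose_add {p c b l : ℕ} (hp : p.Prime)
    (hl_min : ∀ m, b < p ^ m → l ≤ m) (H : ∀ k, 0 < k → k ≤ b → p ∣ (c + k).choose k) :
    p ^ l ∣ c + 1 := by
  set j := (c + 1).factorization p
  suffices hlj : l ≤ j from (pow_dvd_pow p hlj).trans (ordProj_dvd _ _)
  by_contra! hjl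
  have hpj : p ^ j ≤ b := by
    by_contra! hb
    exact absurd (hl_min j hb) (not_le.2 hjl)
  exact not_prime_dvd_choose_add_pow hp (ordProj_dvd _ _)
    (pow_succ_factorization_not_dvd (succ_ne_zero c) hp) (H _ (pow_pos hp.pos j) hpj)

theorem forall_prime_dvd_choose_add_iff_pow_dvd_succ {p c b l : ℕ} (hp : p.Prime)
    (hl : b < p ^ l) (hl_min : ∀ m, b < p ^ m → l ≤ m) :
    (∀ k, 0 < k → k ≤ b → p ∣ (c + k).choose k) ↔ p ^ l ∣ c + 1 :=
  ⟨pow_dvd_succ_of_forall_prime_dvd_choose_add hp hl_min, fun hc _ hk0 hkb =>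
    prime_dvd_choose_add_of_pow_dvd_succ hp hc hk0 (hkb.trans_lt hl)⟩

end Nat

theorem james_corollary_22_5_general (p : ℕ) (hp : p.Prime) (a b l : ℕ)
    (hba : b ≤ a)
    (hl : b < p ^ l) (hl_min : ∀ m, b < p ^ m → l ≤ m) :
    (∀ i < b, p ∣ (a - i).choose (b - i)) ↔ p ^ l ∣ (a - b + 1) := by
  rw [← Nat.forall_prime_dvd_choose_add_iff_pow_dvd_succ hp hl hl_min]
  constructor
  · intro H k hk0 hkb
    have := H (b - k) (by omega)
    rwa [Nat.sub_sub_self hkb, show a - (b - k) = a - b + k by omega] at this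
  · intro H i hi
    have := H (b - i) (by omega) (Nat.sub_le b i)
    rwa [show a - b + (b - i) = a - i by omega] at this

/-- James, Corollary 22.4: for `a ≥ b ≥ 1`, the prime `p` divides all of
`C(a,b), C(a-1,b-1), …, C(a-b+1,1)` iff `a - b ≡ -1 (mod p^{l_p(b)})`, where
`l_p(b)` is the least `l` with `b < p^l`. -/
theorem james_corollary_22_5 (p : ℕ) (hp : p.Prime) (a b l : ℕ)
    (hba : b ≤ a) (hb : 1 ≤ b)
    (hl : b < p ^ l) (hl_min : ∀ m, b < p ^ m → l ≤ m) :
    (∀ i < b, p ∣ (a - i).choose (b - i)) ↔ p ^ l ∣ (a - b + 1) :=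
  james_corollary_22_5_general p hp a b l hba hl hl_min
end

section
/- Let p be a prime, n ≥ 1, r ≥ 1, and 1 ≤ s < p^n. Then p divides the binomial coefficient C((r+1)p^n - s - 1, rp^n - 1). -/
/-! A carry in the base-`p` addition `(r p^n - 1) + (p^n - s)` happens at position `n`: the low `n`
digits of `r p^n - 1` are all `p - 1` and those of `p^n - s` are not all zero. By Kummer's theorem
`p` then divides the binomial coefficient. -/

theorem Nat.mul_sub_one_mod_self {r m : ℕ} (hr : r ≠ 0) : (r * m - 1) % m = m - 1 := by
  obtain ⟨k, rfl⟩ := Nat.exists_eq_succ_of_ne_zero hr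
  rcases Nat.eq_zero_or_pos m with rfl | hm
  · simp
  have hsplit : (k + 1) * m - 1 = (m - 1) + k * m := by rw [add_one_mul]; omega
  rw [hsplit, Nat.add_mul_mod_self_right, Nat.mod_eq_of_lt (by omega)]

theorem Nat.Prime.dvd_choose_add_of_carry {p a b i : ℕ} (hp : p.Prime)
    (hcarry : p ^ i ≤ b % p ^ i + a % p ^ i) : p ∣ (a + b).choose b := by
  have hi : i ∈ Finset.Ico 1 (Nat.log p (a + b) + 1) := by
    have hi0 : i ≠ 0 := by rintro rfl; simp [Nat.mod_one] at hcarry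
    have hpow : p ^ i ≤ a + b :=
      hcarry.trans (add_comm a b ▸ add_le_add (Nat.mod_le b _) (Nat.mod_le a _))
    have := Nat.le_log_of_pow_le hp.one_lt hpow
    simp only [Finset.mem_Ico]
    omega
  refine emultiplicity_ne_zero.1 ?_
  rw [hp.emultiplicity_choose' (Nat.lt_succ_self _)]
  exact_mod_cast (Finset.card_pos.2 ⟨i, Finset.mem_filter.2 ⟨hi, hcarry⟩⟩).ne'

theorem p_dvd_choose_sub_general (p n r s : ℕ) (hp : p.Prime) (hr : 1 ≤ r)
    (hs1 : 1 ≤ s) (hs2 : s < p ^ n) :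
    p ∣ ((r + 1) * p ^ n - s - 1).choose (r * p ^ n - 1) := by
  have hrP : p ^ n ≤ r * p ^ n := Nat.le_mul_of_pos_left _ hr
  have hsplit : (r + 1) * p ^ n - s - 1 = (p ^ n - s) + (r * p ^ n - 1) := by
    rw [add_one_mul]; omega
  rw [hsplit]
  refine hp.dvd_choose_add_of_carry (i := n) ?_
  rw [Nat.mul_sub_one_mod_self (by omega), Nat.mod_eq_of_lt (by omega)]
  omega

/-- For a prime `p`, `n ≥ 1`, `r ≥ 1` and `1 ≤ s < p^n`,
`p` divides `C((r+1)p^n - s - 1, rp^n - 1)`. -/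
theorem p_dvd_choose_sub (p n r s : ℕ) (hp : p.Prime) (hn : 1 ≤ n) (hr : 1 ≤ r)
    (hs1 : 1 ≤ s) (hs2 : s < p ^ n) :
    p ∣ ((r + 1) * p ^ n - s - 1).choose (r * p ^ n - 1) :=
  p_dvd_choose_sub_general p n r s hp hr hs1 hs2
end

section
/- Let p be a prime, n ≥ 1, r ≥ 1. For 0 ≤ i ≤ p^n - 1 with i ∉ {0, p^n - 1}, the product C(p^n - 1, i) · C(rp^n + 1, p^n - i) is divisible by p. -/
/-!
Write `k = p^n - i`, so `2 ≤ k < p^n`. By Pascal, `C(r p^n + 1, k) = C(r p^n, k - 1) + C(r p^n, k)`,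
and both summands are divisible by `p`: if `p^n ∣ N` and `0 < m < p^n`, then
`m · C(N, m) = N · C(N - 1, m - 1)` is divisible by `p^n`, which cannot happen when `p ∤ C(N, m)`
since `p^n ∤ m`.
-/

theorem Nat.Prime.dvd_choose_of_pow_dvd {p n N m : ℕ} (hp : p.Prime) (hN : p ^ n ∣ N)
    (hm0 : m ≠ 0) (hm : m < p ^ n) : p ∣ N.choose m := by
  obtain ⟨j, rfl⟩ := Nat.exists_eq_succ_of_ne_zero hm0
  rcases N with _ | N
  · simp
  by_contra hpC
  have hcop : Nat.Coprime (p ^ n) ((N + 1).choose (j + 1)) :=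
    ((hp.coprime_iff_not_dvd).2 hpC).pow_left n
  have hdvd : p ^ n ∣ (N + 1).choose (j + 1) * (j + 1) :=
    Nat.add_one_mul_choose_eq N j ▸ hN.mul_right _
  exact absurd (Nat.le_of_dvd j.succ_pos (hcop.dvd_of_dvd_mul_left hdvd)) (by omega)

theorem p_dvd_product_choose_general (p n r i : ℕ) (hp : p.Prime)
    (hi : i ≤ p ^ n - 1) (hi0 : i ≠ 0) (hi1 : i ≠ p ^ n - 1) :
    p ∣ (p ^ n - 1).choose i * (r * p ^ n + 1).choose (p ^ n - i) := by
  have hpascal : (r * p ^ n + 1).choose (p ^ n - i)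
      = (r * p ^ n).choose (p ^ n - i - 1) + (r * p ^ n).choose (p ^ n - i) := by
    rw [show p ^ n - i = p ^ n - i - 1 + 1 by omega, Nat.choose_succ_succ', Nat.add_sub_cancel]
  have hdvd : ∀ m, m ≠ 0 → m < p ^ n → p ∣ (r * p ^ n).choose m := fun m hm0 hm ↦
    hp.dvd_choose_of_pow_dvd (dvd_mul_left _ _) hm0 hm
  rw [hpascal]
  exact (dvd_add (hdvd _ (by omega) (by omega)) (hdvd _ (by omega) (by omega))).mul_left _

/-- For a prime `p`, `n ≥ 1`, `r ≥ 1`, and `0 ≤ i ≤ p^n - 1` with `i ∉ {0, p^n - 1}`,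
`p` divides `C(p^n - 1, i) · C(rp^n + 1, p^n - i)`. -/
theorem p_dvd_product_choose (p n r i : ℕ) (hp : p.Prime) (hn : 1 ≤ n) (hr : 1 ≤ r)
    (hi : i ≤ p ^ n - 1) (hi0 : i ≠ 0) (hi1 : i ≠ p ^ n - 1) :
    p ∣ (p ^ n - 1).choose i * (r * p ^ n + 1).choose (p ^ n - i) :=
  p_dvd_product_choose_general p n r i hp hi hi0 hi1
end

section
/- Let p be a prime, n ≥ 0, and a an integer with a ≥ p^n and a ≡ -1 (mod p^{n+1}). Then p does not divide C(a, p^n), while p divides C(a - v, p^n - v) for every v with 1 ≤ v ≤ p^n - 1. -/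
/-!
Since `p ^ (n + 1) ∣ a + 1`, the lowest `n + 1` base-`p` digits of `a` all equal `p - 1`, so by
Lucas's theorem `p ∤ C(a, v)` for every `v < p ^ (n + 1)`; in particular `p ∤ C(a, p ^ n)`.
For `0 < v < p ^ n` the identity `C(a, p^n) C(p^n, v) = C(a, v) C(a - v, p^n - v)` together with
`p ∣ C(p^n, v)` then forces `p ∣ C(a - v, p^n - v)`.
-/

theorem Nat.mod_eq_sub_one_of_dvd_succ {a p : ℕ} (hp : 0 < p) (h : p ∣ a + 1) :
    a % p = p - 1 := by
  have h' : p ∣ a % p + 1 := by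
    rwa [← Nat.mod_add_div a p, add_right_comm, Nat.dvd_add_left (dvd_mul_right p _)] at h
  have := Nat.le_of_dvd (Nat.succ_pos _) h'
  have := Nat.mod_lt a hp
  omega

namespace Nat.Prime

variable {p : ℕ}

theorem not_dvd_choose_of_lt (hp : p.Prime) {m k : ℕ} (hk : k ≤ m) (hm : m < p) :
    ¬ p ∣ m.choose k := fun h => by
  have : p ∣ m ! := choose_mul_factorial_mul_factorial hk ▸ (h.mul_right _).mul_right _
  exact absurd (hp.dvd_factorial.mp this) (not_le.mpr hm)

theorem not_dvd_choose_of_pow_dvd_succ (hp : p.Prime) (n : ℕ) :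
    ∀ {a v : ℕ}, p ^ n ∣ a + 1 → v < p ^ n → ¬ p ∣ a.choose v := by
  have := Fact.mk hp
  induction n with
  | zero =>
    intro a v _ hv
    simp [lt_one_iff.mp (pow_zero p ▸ hv), hp.one_lt.ne']
  | succ n ih =>
    intro a v ha hv hdvd
    have hp_dvd : p ∣ a + 1 := (dvd_pow_self p n.succ_ne_zero).trans ha
    have ha_mod : a % p = p - 1 := Nat.mod_eq_sub_one_of_dvd_succ hp.pos hp_dvd
    have ha_div : p ^ n ∣ a / p + 1 := by
      rw [← succ_div_of_dvd hp_dvd]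
      exact Nat.dvd_div_of_mul_dvd (by rwa [← pow_succ'])
    have hv_div : v / p < p ^ n := (Nat.div_lt_iff_lt_mul hp.pos).mpr (pow_succ p n ▸ hv)
    have hlucas := Choose.choose_modEq_choose_mod_mul_choose_div_nat (p := p) (n := a) (k := v)
    rcases hp.dvd_mul.mp ((hlucas.dvd_iff dvd_rfl).mp hdvd) with hlow | hhigh
    · exact hp.not_dvd_choose_of_lt (ha_mod ▸ Nat.le_sub_one_of_lt (Nat.mod_lt v hp.pos))
        (Nat.mod_lt a hp.pos) hlow
    · exact ih ha_div hv_div hhigh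

end Nat.Prime

theorem choose_p_pow_divisibility_general (p n a : ℕ) (hp : p.Prime)
    (hcong : p ^ (n + 1) ∣ a + 1) :
    ¬ p ∣ a.choose (p ^ n) ∧
      ∀ v, 1 ≤ v → v ≤ p ^ n - 1 → p ∣ (a - v).choose (p ^ n - v) := by
  have hpow_lt : p ^ n < p ^ (n + 1) := Nat.pow_lt_pow_succ hp.one_lt
  refine ⟨hp.not_dvd_choose_of_pow_dvd_succ _ hcong hpow_lt, fun v hv1 hv2 => ?_⟩
  have hv : v < p ^ n := by have := Nat.pow_pos (n := n) hp.pos; omega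
  have hdvd : p ∣ a.choose v * (a - v).choose (p ^ n - v) :=
    Nat.choose_mul hv.le ▸ (hp.dvd_choose_pow (by omega) hv.ne).mul_left _
  exact (hp.dvd_mul.mp hdvd).resolve_left
    (hp.not_dvd_choose_of_pow_dvd_succ _ hcong (hv.trans hpow_lt))

/-- For a prime `p`, `n ≥ 0`, and `a ≥ p^n` with `a ≡ -1 (mod p^{n+1})`:
`p ∤ C(a, p^n)` and `p ∣ C(a - v, p^n - v)` for all `1 ≤ v ≤ p^n - 1`. -/
theorem choose_p_pow_divisibility (p n a : ℕ) (hp : p.Prime)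
    (ha : p ^ n ≤ a) (hcong : p ^ (n + 1) ∣ a + 1) :
    ¬ p ∣ a.choose (p ^ n) ∧
      ∀ v, 1 ≤ v → v ≤ p ^ n - 1 → p ∣ (a - v).choose (p ^ n - v) :=
  choose_p_pow_divisibility_general p n a hp hcong
end

section
/- Let c be a nonzero null (v, l, 0, ..., 0)-design with t+1 zero parameters (i.e., Σ_{x ⊇ y} c(x) = 0 for all s-subsets y with s ≤ t). Then the foundation of c has size at least t + l + 1. -/
/-!
Suppose the foundation `F` had at most `t + l` points and pick `x₀` with `c x₀ ≠ 0`; then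
`B = F \ x₀` has at most `t` points. Inclusion–exclusion over the subsets of `B` turns the null
conditions for the subsets of `B` into `∑_{x ∩ B = ∅} c x = 0`. But a block `x` in the support
avoiding `B` lies in `F \ B = x₀`, so equals `x₀`, and that sum is `c x₀ ≠ 0`.
-/

open Finset

variable {α ι : Type*} [DecidableEq α] [Fintype ι]

theorem sum_powerset_neg_one_pow_mul_sum_superset (s : ι → Finset α) (c : ι → ℤ) (B : Finset α) :
    ∑ y ∈ B.powerset, (-1 : ℤ) ^ #y * (∑ i, if y ⊆ s i then c i else 0) =
      ∑ i, if Disjoint B (s i) then c i else 0 := by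
  simp_rw [mul_sum, mul_ite, mul_zero]
  rw [sum_comm]
  refine sum_congr rfl fun i _ => ?_
  have hfilter : B.powerset.filter (· ⊆ s i) = (B ∩ s i).powerset := by
    ext y
    simp only [mem_filter, mem_powerset, subset_inter_iff]
  rw [← sum_filter, hfilter, ← sum_mul, sum_powerset_neg_one_pow_card, ite_mul, one_mul, zero_mul]
  simp only [disjoint_iff_inter_eq_empty]

theorem sum_disjoint_eq_zero_of_null {s : ι → Finset α} {c : ι → ℤ} {t : ℕ}
    (hnull : ∀ y : Finset α, #y ≤ t → (∑ i, if y ⊆ s i then c i else 0) = 0)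
    {B : Finset α} (hB : #B ≤ t) :
    (∑ i, if Disjoint B (s i) then c i else 0) = 0 := by
  rw [← sum_powerset_neg_one_pow_mul_sum_superset]
  refine sum_eq_zero fun y hy => ?_
  rw [hnull y ((card_le_card (mem_powerset.mp hy)).trans hB), mul_zero]

theorem sum_disjoint_sdiff_eq_of_card_eq {M : Type*} [AddCommMonoid M] {s : ι → Finset α}
    (hs : Function.Injective s) {l : ℕ} (hcard : ∀ i, #(s i) = l) {c : ι → M} {F : Finset α} (hF : ∀ i, c i ≠ 0 → s i ⊆ F) (i₀ : ι) :
    (∑ i, if Disjoint (F \ s i₀) (s i) then c i else 0) = c i₀ := by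
  rw [sum_eq_single i₀ _ (by simp), if_pos disjoint_sdiff_self_left]
  intro i _ hne
  by_cases hci : c i = 0
  · simp [hci]
  refine if_neg fun hdisj => hne (hs ?_)
  have hsub : s i ⊆ s i₀ := fun a ha =>
    by_contra fun ha₀ => disjoint_left.mp hdisj (mem_sdiff.mpr ⟨hF i hci ha, ha₀⟩) ha
  exact eq_of_subset_of_card_le hsub (by rw [hcard, hcard])

/-- Graver–Jurkat: a nonzero null `(t,l)`-design on `{1,…,v}` has foundation of size at
least `t + l + 1`. -/
theorem foundation_of_null_design (v t l : ℕ)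
    (c : {x : Finset (Fin v) // x.card = l} → ℤ)
    (hnull : ∀ s ≤ t, ∀ y : Finset (Fin v), y.card = s →
      (∑ x : {x : Finset (Fin v) // x.card = l}, if y ⊆ x.1 then c x else 0) = 0)
    (hc : c ≠ 0) :
    t + l + 1 ≤ (Finset.univ.filter
      (fun i : Fin v => ∃ x : {x : Finset (Fin v) // x.card = l}, c x ≠ 0 ∧ i ∈ x.1)).card := by
  set F := univ.filter
    (fun i : Fin v => ∃ x : {x : Finset (Fin v) // x.card = l}, c x ≠ 0 ∧ i ∈ x.1)
  obtain ⟨x₀, hx₀⟩ : ∃ x, c x ≠ 0 := Function.ne_iff.mp hc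
  have hsupp : ∀ x, c x ≠ 0 → x.1 ⊆ F := fun x hx i hi => mem_filter.mpr ⟨mem_univ i, x, hx, hi⟩
  by_contra! hF
  have hB : #(F \ x₀.1) ≤ t := by
    rw [card_sdiff_of_subset (hsupp x₀ hx₀), x₀.2]
    omega
  apply hx₀
  rw [← sum_disjoint_sdiff_eq_of_card_eq Subtype.val_injective (fun x => x.2) hsupp x₀]
  exact sum_disjoint_eq_zero_of_null (fun y hy => hnull _ hy y rfl) hB
end

section
/- Over ℤ, for t ≤ l ≤ v - t, the rank of the inclusion matrix G_{tl}(v) (rows indexed by t-subsets, columns by l-subsets of {1,...,v}, entries 1 for inclusion) over the rationals equals C(v, t). -/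
/-!
Write `W_{st}` for the inclusion matrix of `s`-subsets against `t`-subsets of an `n`-set.
Counting the `l`-sets containing `A ∪ A'` with Vandermonde's identity, using
`|A ∪ A'| = 2t - |A ∩ A'|`, gives
`W_{tl} W_{tl}ᵀ = ∑_{s ≤ t} C(n - 2t, n - l - s) W_{st}ᵀ W_{st}`.
This is a nonnegative combination of Gram matrices whose `s = t` term is a positive multiple of
the identity, since `W_{tt} = 1`. So `W_{tl} W_{tl}ᵀ` is positive definite over any ordered
field, hence invertible, and `W_{tl}` has rank `C(n, t)`.
-/

open Finset Matrix

theorem Nat.add_choose_eq_sum_range {i t b : ℕ} (a : ℕ) (hit : i ≤ t) (htb : t ≤ b) :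
    (i + a).choose b = ∑ s ∈ range (t + 1), i.choose s * a.choose (b - s) := by
  rw [Nat.add_choose_eq, Nat.sum_antidiagonal_eq_sum_range_succ_mk]
  refine (sum_subset (range_subset_range.2 (by omega)) fun s hsb hst => ?_).symm
  rw [Nat.choose_eq_zero_of_lt (by simp only [mem_range] at hsb hst; omega), zero_mul]

theorem Finset.sum_subtype_card_boole {α K : Type*} [Fintype α] [AddCommMonoidWithOne K]
    (l : ℕ) (p : Finset α → Prop) [DecidablePred p] :
    ∑ B : {y : Finset α // #y = l}, (if p B.1 then (1 : K) else 0) =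
      #{B ∈ powersetCard l univ | p B} := by
  rw [← sum_boole]
  exact (sum_subtype _ (fun _ => mem_powersetCard_univ)
    (fun B => if p B then (1 : K) else 0)).symm

theorem Finset.card_filter_powersetCard_univ_subset {α : Type*} [Fintype α] [DecidableEq α]
    (C : Finset α) {l : ℕ} (hl : l ≤ Fintype.card α) :
    #{B ∈ powersetCard l univ | C ⊆ B} =
      (Fintype.card α - #C).choose (Fintype.card α - l) := by
  by_cases hCl : #C ≤ l
  · rw [card_filter_powersetCard_subset _ _ _ (subset_univ C) hCl, card_univ]
    exact Nat.choose_symm_of_eq_add (by omega)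
  · have := card_le_univ C
    rw [Nat.choose_eq_zero_of_lt (by omega), card_eq_zero, filter_eq_empty_iff]
    exact fun B hB hCB => hCl ((card_le_card hCB).trans (mem_powersetCard_univ.1 hB).le)

theorem Matrix.dotProduct_mulVec_transpose_mul_self {m n R : Type*} [Fintype m] [Fintype n]
    [CommSemiring R] (N : Matrix m n R) (x : n → R) :
    x ⬝ᵥ ((Nᵀ * N) *ᵥ x) = (N *ᵥ x) ⬝ᵥ (N *ᵥ x) := by
  rw [← mulVec_mulVec, dotProduct_mulVec, vecMul_transpose]

def inclusionMatrix (α K : Type*) [DecidableEq α] [Zero K] [One K] (s t : ℕ) :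
    Matrix {x : Finset α // #x = s} {y : Finset α // #y = t} K :=
  fun x y => if x.1 ⊆ y.1 then 1 else 0

section Semiring

variable {α K : Type*} [DecidableEq α] [Semiring K]

theorem inclusionMatrix_self (t : ℕ) : inclusionMatrix α K t t = 1 := by
  ext A A'
  simp only [inclusionMatrix, one_apply]
  exact if_congr ⟨fun h => Subtype.ext (eq_of_subset_of_card_le h (by rw [A.2, A'.2])),
    fun h => h ▸ subset_rfl⟩ rfl rfl

variable [Fintype α]

theorem inclusionMatrix_mul_transpose_apply {t l : ℕ} (hl : l ≤ Fintype.card α)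
    (A A' : {x : Finset α // #x = t}) :
    (inclusionMatrix α K t l * (inclusionMatrix α K t l)ᵀ) A A' =
      (Fintype.card α - #(A.1 ∪ A'.1)).choose (Fintype.card α - l) := by
  simp only [mul_apply, transpose_apply, inclusionMatrix, ite_zero_mul_ite_zero, one_mul]
  simp_rw [← union_subset_iff]
  rw [sum_subtype_card_boole l (A.1 ∪ A'.1 ⊆ ·), card_filter_powersetCard_univ_subset _ hl]

theorem transpose_inclusionMatrix_mul_apply {s t : ℕ} (A A' : {x : Finset α // #x = t}) :
    ((inclusionMatrix α K s t)ᵀ * inclusionMatrix α K s t) A A' =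
      (#(A.1 ∩ A'.1)).choose s := by
  simp only [mul_apply, transpose_apply, inclusionMatrix, ite_zero_mul_ite_zero, one_mul]
  simp_rw [← subset_inter_iff]
  rw [sum_subtype_card_boole s (· ⊆ A.1 ∩ A'.1), ← card_powersetCard]
  congr 2
  ext S
  simp [mem_powersetCard, and_comm]

theorem inclusionMatrix_mul_transpose_eq_sum {t l : ℕ} (htl : t ≤ l)
    (hlv : l ≤ Fintype.card α - t) :
    inclusionMatrix α K t l * (inclusionMatrix α K t l)ᵀ =
      ∑ s ∈ range (t + 1), ((Fintype.card α - 2 * t).choose (Fintype.card α - l - s) : K) •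
        ((inclusionMatrix α K s t)ᵀ * inclusionMatrix α K s t) := by
  ext A A'
  have hunion : #(A.1 ∪ A'.1) + #(A.1 ∩ A'.1) = 2 * t := by
    rw [card_union_add_card_inter, A.2, A'.2, two_mul]
  have hinter : #(A.1 ∩ A'.1) ≤ t := (card_le_card inter_subset_left).trans_eq A.2
  have hcompl :
      Fintype.card α - #(A.1 ∪ A'.1) = #(A.1 ∩ A'.1) + (Fintype.card α - 2 * t) := by
    omega
  simp only [inclusionMatrix_mul_transpose_apply (by omega : l ≤ Fintype.card α),
    Matrix.sum_apply, Matrix.smul_apply, transpose_inclusionMatrix_mul_apply, hcompl,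
    Nat.add_choose_eq_sum_range _ hinter (by omega : t ≤ Fintype.card α - l)]
  push_cast
  exact sum_congr rfl fun s _ => Nat.cast_comm _ _

end Semiring

section OrderedField

variable {α K : Type*} [Fintype α] [DecidableEq α] [Field K] [LinearOrder K]
  [IsStrictOrderedRing K]

theorem choose_mul_dotProduct_self_le_dotProduct_mulVec {t l : ℕ} (htl : t ≤ l)
    (hlv : l ≤ Fintype.card α - t) (x : {x : Finset α // #x = t} → K) :
    ((Fintype.card α - 2 * t).choose (Fintype.card α - l - t) : K) * (x ⬝ᵥ x) ≤
      x ⬝ᵥ ((inclusionMatrix α K t l * (inclusionMatrix α K t l)ᵀ) *ᵥ x) := by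
  rw [inclusionMatrix_mul_transpose_eq_sum htl hlv, sum_mulVec, dotProduct_sum]
  simp only [smul_mulVec, dotProduct_smul, smul_eq_mul, dotProduct_mulVec_transpose_mul_self]
  refine le_of_eq_of_le ?_ (single_le_sum (fun s _ => ?_) (self_mem_range_succ t))
  · rw [inclusionMatrix_self, one_mulVec]
  · exact mul_nonneg (Nat.cast_nonneg _) (sum_nonneg fun i _ => mul_self_nonneg _)

theorem mulVec_injective_inclusionMatrix_mul_transpose {t l : ℕ} (htl : t ≤ l)
    (hlv : l ≤ Fintype.card α - t) :
    Function.Injective (inclusionMatrix α K t l * (inclusionMatrix α K t l)ᵀ).mulVec := by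
  intro x y hxy
  have hchoose : (0 : K) < (Fintype.card α - 2 * t).choose (Fintype.card α - l - t) :=
    Nat.cast_pos.2 (Nat.choose_pos (by omega))
  have hle := choose_mul_dotProduct_self_le_dotProduct_mulVec htl hlv (x - y)
  rw [mulVec_sub, hxy, sub_self, dotProduct_zero] at hle
  exact sub_eq_zero.1 (dotProduct_self_eq_zero.1 (le_antisymm
    (nonpos_of_mul_nonpos_right hle hchoose) (sum_nonneg fun i _ => mul_self_nonneg _)))

theorem rank_inclusionMatrix {t l : ℕ} (htl : t ≤ l) (hlv : l ≤ Fintype.card α - t) :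
    (inclusionMatrix α K t l).rank = (Fintype.card α).choose t := by
  rw [← rank_self_mul_transpose, rank_of_isUnit _ (mulVec_injective_iff_isUnit.1
    (mulVec_injective_inclusionMatrix_mul_transpose htl hlv)), Fintype.card_finset_len]

end OrderedField

/-- Gottlieb / Graver–Jurkat: for `t ≤ l ≤ v - t`, the inclusion matrix `G_{tl}(v)`
(rows indexed by `t`-subsets, columns by `l`-subsets of `{1,…,v}`, entries `1` for
inclusion) has rank `C(v, t)` over the rationals. -/
theorem inclusion_matrix_rank (v t l : ℕ) (htl : t ≤ l) (hlv : l ≤ v - t) :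
    (Matrix.rank (fun (x : {x : Finset (Fin v) // x.card = t})
        (y : {y : Finset (Fin v) // y.card = l}) =>
        (if x.1 ⊆ y.1 then (1 : ℚ) else 0))) = v.choose t := by
  have h := rank_inclusionMatrix (α := Fin v) (K := ℚ) htl (by rwa [Fintype.card_fin])
  rwa [Fintype.card_fin] at h
end

section
/- For all integers a ≥ b ≥ 1, the strict inequality b/(a+1) + 1/(b+1) + (a+1)(a-b+1)b / ((a+2)(a+1)(b+1)) < 1 + a!·b!/(a+b)! + b!/(b+1)! holds. -/
/-!
The term `b!/(b+1)!` equals `1/(b+1)` and cancels against `1/(b+1)` on the left. What remains on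
the left is at most `1`, because clearing denominators gives
`1 - b/(a+1) - (a-b+1)b/((a+2)(b+1)) = (a+1-b)(a+b+2)/((a+1)(a+2)(b+1)) ≥ 0`,
while the right-hand side exceeds `1` by the positive number `a!b!/(a+b)!`.
-/

open Nat

theorem Nat.cast_factorial_div_factorial_succ {K : Type*} [Field K] [CharZero K] (n : ℕ) :
    (n ! : K) / ((n + 1)! : K) = 1 / ((n : K) + 1) := by
  rw [factorial_succ, cast_mul, cast_succ,
    div_mul_cancel_right₀ (cast_ne_zero.2 (factorial_ne_zero n)), one_div]

theorem one_sub_div_sub_mul_div_eq {K : Type*} [Field K] {x y : K}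
    (hx₁ : x + 1 ≠ 0) (hx₂ : x + 2 ≠ 0) (hy : y + 1 ≠ 0) :
    1 - y / (x + 1) - (x + 1) * (x - y + 1) * y / ((x + 2) * (x + 1) * (y + 1)) =
      (x + 1 - y) * (x + y + 2) / ((x + 1) * (x + 2) * (y + 1)) := by
  field_simp
  ring

theorem div_add_mul_div_le_one {K : Type*} [Field K] [LinearOrder K] [IsStrictOrderedRing K]
    {x y : K} (hx : 0 ≤ x) (hy : 0 ≤ y) (hyx : y ≤ x + 1) :
    y / (x + 1) + (x + 1) * (x - y + 1) * y / ((x + 2) * (x + 1) * (y + 1)) ≤ 1 := by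
  have h := one_sub_div_sub_mul_div_eq (by positivity) (by positivity) (by positivity : y + 1 ≠ 0)
  have : 0 ≤ (x + 1 - y) * (x + y + 2) / ((x + 1) * (x + 2) * (y + 1)) := by
    apply div_nonneg <;> apply_rules [mul_nonneg] <;> linarith
  linarith

theorem key_inequality_general (a b : ℕ) (hba : b ≤ a) :
    (b : ℚ) / (a + 1) + 1 / (b + 1) +
        ((a : ℚ) + 1) * ((a : ℚ) - (b : ℚ) + 1) * (b : ℚ) /
          (((a : ℚ) + 2) * ((a : ℚ) + 1) * ((b : ℚ) + 1)) <
      1 + ((a.factorial : ℚ) * (b.factorial : ℚ)) / ((a + b).factorial : ℚ) +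
        (b.factorial : ℚ) / ((b + 1).factorial : ℚ) := by
  have h_le_one := div_add_mul_div_le_one (a.cast_nonneg : (0 : ℚ) ≤ a) b.cast_nonneg
    (by exact_mod_cast hba.trans a.le_succ)
  have h_pos : 0 < ((a ! : ℚ) * (b ! : ℚ)) / ((a + b)! : ℚ) := by positivity
  rw [Nat.cast_factorial_div_factorial_succ]
  linarith

/-- For all integers `a ≥ b ≥ 1`,
`b/(a+1) + 1/(b+1) + (a+1)(a-b+1)b/((a+2)(a+1)(b+1)) < 1 + a!b!/(a+b)! + b!/(b+1)!`. -/
theorem key_inequality (a b : ℕ) (hb : 1 ≤ b) (hba : b ≤ a) :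
    (b : ℚ) / (a + 1) + 1 / (b + 1) +
        ((a : ℚ) + 1) * ((a : ℚ) - (b : ℚ) + 1) * (b : ℚ) /
          (((a : ℚ) + 2) * ((a : ℚ) + 1) * ((b : ℚ) + 1)) <
      1 + ((a.factorial : ℚ) * (b.factorial : ℚ)) / ((a + b).factorial : ℚ) +
        (b.factorial : ℚ) / ((b + 1).factorial : ℚ) :=
  key_inequality_general a b hba
end
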